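/- Let ζ ∈ [0,1) and let x : ℝ → E be a GDAM trajectory on [0,T], i.e. x'(t) = s_ζ(x(t)) with ∇f(x(t)) ≠ 0 and ∇g(x(t)) ≠ 0 for all t ∈ [0,T]. Then f(x(T)) ≤ f(x(0)) − (1 − ζ) · ∫₀ᵀ ‖∇f(x(s))‖ ds. -/

import Mathlib

open RealInnerProductSpace
open Set

/-!
Along the trajectory, `d/dt f(x(t)) = ⟪∇f, s_ζ⟫ = -‖∇f‖ - ζ ⟪∇f, ∇g/‖∇g‖⟫ ≤ -(1 - ζ) ‖∇f‖`
by Cauchy–Schwarz, and integrating this differential inequality over `[0, T]` gives the bound.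
-/

section GradientFlow

variable {F : Type*} [NormedAddCommGroup F] [InnerProductSpace ℝ F]

theorem real_inner_inv_norm_smul_self (a : F) : ⟪a, ‖a‖⁻¹ • a⟫ = ‖a‖ := by
  rcases eq_or_ne a 0 with rfl | ha
  · simp
  · rw [real_inner_smul_right, real_inner_self_eq_norm_sq]
    field_simp [norm_ne_zero_iff.2 ha]

theorem neg_norm_le_real_inner_inv_norm_smul (a b : F) : -‖a‖ ≤ ⟪a, ‖b‖⁻¹ • b⟫ := by
  have hunit : ‖‖b‖⁻¹ • b‖ ≤ 1 := by
    simpa using inv_norm_smul_mem_unitClosedBall b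
  calc -‖a‖ ≤ -(‖a‖ * ‖‖b‖⁻¹ • b‖) := by
        gcongr; exact mul_le_of_le_one_right (norm_nonneg a) hunit
    _ ≤ ⟪a, ‖b‖⁻¹ • b⟫ := neg_le_of_abs_le (abs_real_inner_le_norm _ _)

variable [CompleteSpace F]

/-- The GDAM vector field `s_ζ`; at a critical point of `f` or `g` the corresponding term is `0`. -/
noncomputable def gdamField (f g : F → ℝ) (ζ : ℝ) (y : F) : F :=
  -(‖gradient f y‖⁻¹ • gradient f y) - ζ • (‖gradient g y‖⁻¹ • gradient g y)

theorem ContDiff.continuous_gradient {f : F → ℝ} (hf : ContDiff ℝ 1 f) :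
    Continuous (gradient f) :=
  (InnerProductSpace.toDual ℝ F).symm.continuous.comp (hf.continuous_fderiv one_ne_zero)

theorem HasGradientAt.comp_hasDerivAt {f : F → ℝ} {f' : F} {x : ℝ → F} {v : F} {t : ℝ}
    (hf : HasGradientAt f f' (x t)) (hx : HasDerivAt x v t) :
    HasDerivAt (fun s => f (x s)) ⟪f', v⟫ t :=
  hf.hasFDerivAt.comp_hasDerivAt t hx

theorem real_inner_gradient_gdamField_le (f g : F → ℝ) {ζ : ℝ} (hζ : 0 ≤ ζ) (y : F) :
    ⟪gradient f y, gdamField f g ζ y⟫ ≤ -((1 - ζ) * ‖gradient f y‖) := by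
  have hg := neg_norm_le_real_inner_inv_norm_smul (gradient f y) (gradient g y)
  rw [gdamField, inner_sub_right, inner_neg_right, real_inner_inv_norm_smul_self,
    real_inner_smul_right]
  nlinarith

theorem sub_le_integral_of_real_inner_gradient_le {f : F → ℝ} (hf : ContDiff ℝ 1 f)
    {x v : ℝ → F} {φ : ℝ → ℝ} {a b : ℝ} (hab : a ≤ b)
    (hx : ∀ t ∈ Icc a b, HasDerivAt x (v t) t) (hφ : ContinuousOn φ (Icc a b))
    (hle : ∀ t ∈ Ioo a b, ⟪gradient f (x t), v t⟫ ≤ φ t) :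
    f (x b) - f (x a) ≤ ∫ t in a..b, φ t := by
  have hxcont : ContinuousOn x (Icc a b) := fun t ht => (hx t ht).continuousAt.continuousWithinAt
  have hderiv : ∀ t ∈ Ioo a b,
      HasDerivAt (fun s => f (x s)) ⟪gradient f (x t), v t⟫ t := fun t ht =>
    (hf.differentiable one_ne_zero (x t)).hasGradientAt.comp_hasDerivAt
      (hx t (Ioo_subset_Icc_self ht))
  exact intervalIntegral.sub_le_integral_of_hasDeriv_right_of_le hab
    (hf.continuous.comp_continuousOn hxcont) (fun t ht => (hderiv t ht).hasDerivWithinAt)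
    hφ.integrableOn_Icc hle

end GradientFlow

theorem gdam_objective_decrease_integral_general {n : ℕ}
    (f g : EuclideanSpace ℝ (Fin n) → ℝ)
    (hf : ContDiff ℝ 2 f)
    (ζ : ℝ) (hζ : ζ ∈ Set.Ico (0 : ℝ) 1)
    (T : ℝ) (hT : 0 ≤ T)
    (x : ℝ → EuclideanSpace ℝ (Fin n))
    (hx : ∀ t ∈ Set.Icc (0 : ℝ) T, HasDerivAt x
      (-(‖gradient f (x t)‖⁻¹ • gradient f (x t))
        - ζ • (‖gradient g (x t)‖⁻¹ • gradient g (x t))) t) :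
    f (x T) ≤ f (x 0) - (1 - ζ) * ∫ s in (0 : ℝ)..T, ‖gradient f (x s)‖ := by
  have hf₁ : ContDiff ℝ 1 f := hf.of_le (by norm_num)
  have hxcont : ContinuousOn x (Icc 0 T) := fun t ht => (hx t ht).continuousAt.continuousWithinAt
  have hrate : ContinuousOn (fun t => -((1 - ζ) * ‖gradient f (x t)‖)) (Icc 0 T) :=
    ((hf₁.continuous_gradient.comp_continuousOn hxcont).norm.const_smul (1 - ζ)).neg
  have key := sub_le_integral_of_real_inner_gradient_le hf₁ hT hx hrate
    fun t _ => real_inner_gradient_gdamField_le f g hζ.1 (x t)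
  rw [intervalIntegral.integral_neg, intervalIntegral.integral_const_mul] at key
  linarith

/-- along a GDAM trajectory on `[0,T]`,
`f(x(T)) ≤ f(x(0)) - (1-ζ) ∫₀ᵀ ‖∇f(x(s))‖ ds`. -/
theorem gdam_objective_decrease_integral {n : ℕ}
    (f g : EuclideanSpace ℝ (Fin n) → ℝ)
    (hf : ContDiff ℝ 2 f) (hg : ContDiff ℝ 2 g)
    (ζ : ℝ) (hζ : ζ ∈ Set.Ico (0 : ℝ) 1)
    (T : ℝ) (hT : 0 ≤ T)
    (x : ℝ → EuclideanSpace ℝ (Fin n))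
    (hgf : ∀ t ∈ Set.Icc (0 : ℝ) T, gradient f (x t) ≠ 0)
    (hgg : ∀ t ∈ Set.Icc (0 : ℝ) T, gradient g (x t) ≠ 0)
    (hx : ∀ t ∈ Set.Icc (0 : ℝ) T, HasDerivAt x
      (-(‖gradient f (x t)‖⁻¹ • gradient f (x t))
        - ζ • (‖gradient g (x t)‖⁻¹ • gradient g (x t))) t) :
    f (x T) ≤ f (x 0) - (1 - ζ) * ∫ s in (0 : ℝ)..T, ‖gradient f (x s)‖ :=
  gdam_objective_decrease_integral_general f g hf ζ hζ T hT x hx
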